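/- arXiv:2102.04655 — 5 statements merged into one kernel-verified Lean document; each statement's English description precedes it below -/
import Mathlib

section
/- Let X be a nonempty finite type and let p, q be probability mass functions on X. For every function D : X → ℝ with 0 < D x < 1 for all x, one has ∑_{x∈X} [ p x · log(D x) + q x · log(1 − D x) ] ≤ ∑_{x∈X} [ p x · log(p x/(p x + q x)) + q x · log(q x/(p x + q x)) ], with equality if and only if D x = p x/(p x + q x) for all x. -/
open Finset

/-
Pointwise, `t ↦ a log t + b log (1 - t)` is maximised on `(0, 1)` exactly at `t = a / (a + b)`:
applying `log y ≤ y - 1` (strict unless `y = 1`) to `y = t (a + b) / a` and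
`y = (1 - t) (a + b) / b` and adding, the linear remainders cancel. Summing over `x` gives the
inequality, and a sum of pointwise inequalities is an equality only if every summand is.
-/

namespace Real

theorem mul_log_lt_mul_log_div_add_sub {a c t : ℝ} (ha : 0 < a) (hc : 0 < c) (ht : 0 < t)
    (hne : t ≠ a / c) : a * log t < a * log (a / c) + (c * t - a) := by
  have hy : t * c / a ≠ 1 := by
    rw [ne_eq, div_eq_one_iff_eq ha.ne', ← eq_div_iff hc.ne']
    exact hne
  have hlog : log t - log (a / c) = log (t * c / a) := by
    rw [← log_div ht.ne' (by positivity)]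
    congr 1
    field_simp
  have key := mul_lt_mul_of_pos_left (log_lt_sub_one_of_pos (by positivity) hy) ha
  rw [← hlog, mul_sub, mul_sub, mul_div_cancel₀ _ ha.ne'] at key
  linarith

theorem mul_log_le_mul_log_div_add_sub {a c t : ℝ} (ha : 0 < a) (hc : 0 < c) (ht : 0 < t) :
    a * log t ≤ a * log (a / c) + (c * t - a) := by
  rcases eq_or_ne t (a / c) with rfl | hne
  · rw [mul_div_cancel₀ _ hc.ne']
    simp
  · exact (mul_log_lt_mul_log_div_add_sub ha hc ht hne).le

end Real

open Real

theorem mul_log_add_mul_log_one_sub_le {a b t : ℝ} (ha : 0 < a) (hb : 0 < b) (ht0 : 0 < t)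
    (ht1 : t < 1) :
    a * log t + b * log (1 - t) ≤ a * log (a / (a + b)) + b * log (b / (a + b)) := by
  have hab : 0 < a + b := add_pos ha hb
  have h₁ := mul_log_le_mul_log_div_add_sub ha hab ht0
  have h₂ := mul_log_le_mul_log_div_add_sub hb hab (sub_pos.2 ht1)
  linarith

theorem mul_log_add_mul_log_one_sub_eq_iff {a b t : ℝ} (ha : 0 < a) (hb : 0 < b) (ht0 : 0 < t)
    (ht1 : t < 1) :
    a * log t + b * log (1 - t) = a * log (a / (a + b)) + b * log (b / (a + b)) ↔
      t = a / (a + b) := by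
  have hab : 0 < a + b := add_pos ha hb
  constructor
  · intro heq
    by_contra hne
    have h₁ := mul_log_lt_mul_log_div_add_sub ha hab ht0 hne
    have h₂ := mul_log_le_mul_log_div_add_sub hb hab (sub_pos.2 ht1)
    linarith
  · rintro rfl
    rw [one_sub_div hab.ne', add_sub_cancel_left]

theorem stmt_1_general {X : Type*} [Fintype X]
    (p q : X → ℝ)
    (hp : ∀ x, 0 < p x)
    (hq : ∀ x, 0 < q x)
    (D : X → ℝ) (hD0 : ∀ x, 0 < D x) (hD1 : ∀ x, D x < 1) :
    (∑ x, (p x * Real.log (D x) + q x * Real.log (1 - D x))) ≤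
      (∑ x, (p x * Real.log (p x / (p x + q x)) + q x * Real.log (q x / (p x + q x)))) ∧
    ((∑ x, (p x * Real.log (D x) + q x * Real.log (1 - D x))) =
      (∑ x, (p x * Real.log (p x / (p x + q x)) + q x * Real.log (q x / (p x + q x)))) ↔
      ∀ x, D x = p x / (p x + q x)) := by
  have hle : ∀ x ∈ univ, p x * log (D x) + q x * log (1 - D x) ≤
      p x * log (p x / (p x + q x)) + q x * log (q x / (p x + q x)) := fun x _ ↦
    mul_log_add_mul_log_one_sub_le (hp x) (hq x) (hD0 x) (hD1 x)
  refine ⟨sum_le_sum hle, ?_⟩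
  rw [sum_eq_sum_iff_of_le hle]
  simp only [mem_univ, forall_const,
    fun x ↦ mul_log_add_mul_log_one_sub_eq_iff (hp x) (hq x) (hD0 x) (hD1 x)]

/-- Optimal local discriminator (Lemma 1): for pmfs `p, q` on a nonempty finite type,
the GAN objective is maximized over discriminators `D` with values in `(0,1)` by
`D x = p x / (p x + q x)`, with equality iff `D` equals this everywhere. -/
theorem stmt_1 {X : Type*} [Fintype X] [Nonempty X]
    (p q : X → ℝ)
    (hp : ∀ x, 0 < p x) (hps : ∑ x, p x = 1)
    (hq : ∀ x, 0 < q x) (hqs : ∑ x, q x = 1)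
    (D : X → ℝ) (hD0 : ∀ x, 0 < D x) (hD1 : ∀ x, D x < 1) :
    (∑ x, (p x * Real.log (D x) + q x * Real.log (1 - D x))) ≤
      (∑ x, (p x * Real.log (p x / (p x + q x)) + q x * Real.log (q x / (p x + q x)))) ∧
    ((∑ x, (p x * Real.log (D x) + q x * Real.log (1 - D x))) =
      (∑ x, (p x * Real.log (p x / (p x + q x)) + q x * Real.log (q x / (p x + q x)))) ↔
      ∀ x, D x = p x / (p x + q x)) :=
  stmt_1_general p q hp hq D hD0 hD1
end

section
/- Let J be a nonempty finite index set, let π : J → ℝ be nonnegative weights with ∑_{j∈J} π_j = 1, and fix reals p_j > 0 for each j ∈ J and q > 0. Define D_j = p_j/(p_j + q) for each j, and set p = ∑_{j∈J} π_j · p_j. Then ∑_{j∈J} π_j · Φ(D_j) = p/q, and consequently, with S = ∑_{j∈J} π_j · Φ(D_j), one has S/(1+S) = p/(p+q). -/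
/-! The odds of `p / (p + q)` is `p / q`, which is linear in `p`, so mixing odds mixes the
densities; and `S ↦ S / (1 + S)` inverts the odds map. -/

open Finset

/-- The odds value of a probability `φ`. -/
noncomputable def oddsValue (φ : ℝ) : ℝ := φ / (1 - φ)

theorem oddsValue_div_add {p q : ℝ} (hpq : p + q ≠ 0) :
    oddsValue (p / (p + q)) = p / q := by
  have hcompl : 1 - p / (p + q) = q / (p + q) := by field_simp; ring
  rw [oddsValue, hcompl, div_div_div_cancel_right₀ hpq]

theorem div_div_one_add_div {K : Type*} [Field K] (a : K) {q : K} (hq : q ≠ 0) :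
    a / q / (1 + a / q) = a / (a + q) := by
  rw [one_add_div hq, div_div_div_cancel_right₀ hq, add_comm q]

theorem stmt_2_general {J : Type*} [Fintype J]
    (π : J → ℝ)
    (p : J → ℝ) (hp : ∀ j, 0 < p j) (q : ℝ) (hq : 0 < q)
    (D : J → ℝ) (hD : ∀ j, D j = p j / (p j + q)) :
    (∑ j, π j * oddsValue (D j)) = (∑ j, π j * p j) / q ∧
    (∑ j, π j * oddsValue (D j)) / (1 + ∑ j, π j * oddsValue (D j)) =
      (∑ j, π j * p j) / ((∑ j, π j * p j) + q) := by
  have hodds (j : J) : oddsValue (D j) = p j / q := by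
    rw [hD]
    exact oddsValue_div_add (add_pos (hp j) hq).ne'
  have hsum : (∑ j, π j * oddsValue (D j)) = (∑ j, π j * p j) / q := by
    simp only [hodds, sum_div, mul_div_assoc]
  exact ⟨hsum, hsum ▸ div_div_one_add_div _ hq.ne'⟩

/-- Universal aggregation identity: if each local discriminator is optimal,
`D j = p j / (p j + q)`, then the mixture of odds values equals `p/q` where
`p = ∑ j, π j * p j`, and consequently `S/(1+S) = p/(p+q)` where
`S = ∑ j, π j * Φ(D j)`. -/
theorem stmt_2 {J : Type*} [Fintype J] [Nonempty J]
    (π : J → ℝ) (hπ : ∀ j, 0 ≤ π j) (hπs : ∑ j, π j = 1)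
    (p : J → ℝ) (hp : ∀ j, 0 < p j) (q : ℝ) (hq : 0 < q)
    (D : J → ℝ) (hD : ∀ j, D j = p j / (p j + q)) :
    (∑ j, π j * oddsValue (D j)) = (∑ j, π j * p j) / q ∧
    (∑ j, π j * oddsValue (D j)) / (1 + ∑ j, π j * oddsValue (D j)) =
      (∑ j, π j * p j) / ((∑ j, π j * p j) + q) :=
  stmt_2_general π p hp q hq D hD
end

section
/- Let X be a nonempty finite type and let p be a probability mass function on X. For every probability mass function q on X, the Jensen–Shannon divergence loss L(q) = ∑_{x∈X} [ p x · log(p x/(p x + q x)) + q x · log(q x/(p x + q x)) ] satisfies L(q) ≥ −2·log 2, with equality if and only if q x = p x for all x. In particular, q = p is the unique minimizer of L over probability mass functions on X. -/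
open Finset

lemma kl_aux_stmt3 {X : Type*} [Fintype X]
    (p m : X → ℝ) (hp : ∀ x, 0 < p x) (hm : ∀ x, 0 < m x)
    (hps : ∑ x, p x = 1) (hms : ∑ x, m x = 1) :
    0 ≤ ∑ x, p x * Real.log (p x / m x) ∧
    ((∑ x, p x * Real.log (p x / m x)) = 0 ↔ ∀ x, m x = p x) := by
  have hterm : ∀ x, p x * Real.log (m x / p x) ≤ m x - p x := by
    intro x
    have h1 : Real.log (m x / p x) ≤ m x / p x - 1 :=
      Real.log_le_sub_one_of_pos (div_pos (hm x) (hp x))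
    have h2 := mul_le_mul_of_nonneg_left h1 (hp x).le
    calc p x * Real.log (m x / p x) ≤ p x * (m x / p x - 1) := h2
      _ = m x - p x := by
          rw [mul_sub, mul_one, mul_div_cancel₀ _ (hp x).ne']
  have hneg : ∀ x, p x * Real.log (p x / m x) = -(p x * Real.log (m x / p x)) := by
    intro x
    rw [Real.log_div (hp x).ne' (hm x).ne', Real.log_div (hm x).ne' (hp x).ne']
    ring
  have hrw : ∑ x, p x * Real.log (p x / m x) = -∑ x, p x * Real.log (m x / p x) := by
    rw [← Finset.sum_neg_distrib]
    exact Finset.sum_congr rfl fun x _ => hneg x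
  have hsumle : ∑ x, p x * Real.log (m x / p x) ≤ 0 := by
    calc ∑ x, p x * Real.log (m x / p x) ≤ ∑ x, (m x - p x) :=
          Finset.sum_le_sum fun x _ => hterm x
      _ = 0 := by rw [Finset.sum_sub_distrib, hps, hms]; ring
  refine ⟨by rw [hrw]; linarith, ?_, ?_⟩
  · intro h0
    by_contra hc
    push_neg at hc
    obtain ⟨x0, hx0⟩ := hc
    have hne : m x0 / p x0 ≠ 1 := by
      intro h
      apply hx0
      have := (div_eq_one_iff_eq (hp x0).ne').mp h
      linarith
    have h1 : Real.log (m x0 / p x0) < m x0 / p x0 - 1 :=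
      Real.log_lt_sub_one_of_pos (div_pos (hm x0) (hp x0)) hne
    have hstrict : p x0 * Real.log (m x0 / p x0) < m x0 - p x0 := by
      have h2 := mul_lt_mul_of_pos_left h1 (hp x0)
      calc p x0 * Real.log (m x0 / p x0) < p x0 * (m x0 / p x0 - 1) := h2
        _ = m x0 - p x0 := by
            rw [mul_sub, mul_one, mul_div_cancel₀ _ (hp x0).ne']
    have hlt : ∑ x, p x * Real.log (m x / p x) < 0 := by
      calc ∑ x, p x * Real.log (m x / p x)
          < ∑ x, (m x - p x) :=
            Finset.sum_lt_sum (fun x _ => hterm x) ⟨x0, Finset.mem_univ x0, hstrict⟩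
        _ = 0 := by rw [Finset.sum_sub_distrib, hps, hms]; ring
    rw [hrw] at h0; linarith
  · intro h
    rw [hrw]
    have hz : ∀ x, p x * Real.log (m x / p x) = 0 := by
      intro x; rw [h x, div_self (hp x).ne', Real.log_one, mul_zero]
    simp [hz]

/-- Correctness of UA-GAN (Theorem 1): for pmfs `p, q` on a nonempty finite type,
the Jensen–Shannon divergence loss is at least `-2 log 2`, with equality iff `q = p`;
in particular `q = p` is the unique minimizer. -/
theorem stmt_3 {X : Type*} [Fintype X] [Nonempty X]
    (p : X → ℝ) (hp : ∀ x, 0 < p x) (hps : ∑ x, p x = 1)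
    (q : X → ℝ) (hq : ∀ x, 0 < q x) (hqs : ∑ x, q x = 1) :
    (∑ x, (p x * Real.log (p x / (p x + q x)) + q x * Real.log (q x / (p x + q x)))) ≥
      -2 * Real.log 2 ∧
    ((∑ x, (p x * Real.log (p x / (p x + q x)) + q x * Real.log (q x / (p x + q x)))) =
      -2 * Real.log 2 ↔ ∀ x, q x = p x) := by
  set m : X → ℝ := fun x => (p x + q x) / 2 with hm_def
  have hm : ∀ x, 0 < m x := fun x => by have := hp x; have := hq x; positivity
  have hms : ∑ x, m x = 1 := by
    simp only [hm_def]
    rw [← Finset.sum_div, Finset.sum_add_distrib, hps, hqs]; norm_num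
  have hpq : ∀ x, p x + q x ≠ 0 := fun x => by have := hp x; have := hq x; positivity
  have hlogp : ∀ x, Real.log (p x / (p x + q x)) = Real.log (p x / m x) - Real.log 2 := by
    intro x
    have h2 : m x * 2 = p x + q x := by simp only [hm_def]; ring
    have : p x / (p x + q x) = (p x / m x) / 2 := by rw [div_div, h2]
    rw [this, Real.log_div (div_pos (hp x) (hm x)).ne' (by norm_num)]
  have hlogq : ∀ x, Real.log (q x / (p x + q x)) = Real.log (q x / m x) - Real.log 2 := by
    intro x
    have h2 : m x * 2 = p x + q x := by simp only [hm_def]; ring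
    have : q x / (p x + q x) = (q x / m x) / 2 := by rw [div_div, h2]
    rw [this, Real.log_div (div_pos (hq x) (hm x)).ne' (by norm_num)]
  have hdecomp :
      (∑ x, (p x * Real.log (p x / (p x + q x)) + q x * Real.log (q x / (p x + q x)))) =
      (∑ x, p x * Real.log (p x / m x)) + (∑ x, q x * Real.log (q x / m x))
        - 2 * Real.log 2 := by
    have : ∀ x, p x * Real.log (p x / (p x + q x)) + q x * Real.log (q x / (p x + q x))
        = (p x * Real.log (p x / m x) + q x * Real.log (q x / m x))
          - (p x + q x) * Real.log 2 := by
      intro x; rw [hlogp x, hlogq x]; ring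
    rw [Finset.sum_congr rfl fun x _ => this x, Finset.sum_sub_distrib,
      Finset.sum_add_distrib, ← Finset.sum_mul, Finset.sum_add_distrib, hps, hqs]
    ring
  obtain ⟨hA, hAeq⟩ := kl_aux_stmt3 p m hp hm hps hms
  obtain ⟨hB, hBeq⟩ := kl_aux_stmt3 q m hq hm hqs hms
  constructor
  · rw [hdecomp]; linarith
  · rw [hdecomp]
    constructor
    · intro h
      have hA0 : (∑ x, p x * Real.log (p x / m x)) = 0 := by linarith
      intro x
      have := hAeq.mp hA0 x
      simp only [hm_def] at this; linarith
    · intro h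
      have hmp : ∀ x, m x = p x := fun x => by simp only [hm_def, h x]; ring
      have hmq : ∀ x, m x = q x := fun x => by simp only [hm_def, h x]; ring
      rw [hAeq.mpr hmp, hBeq.mpr hmq]; ring
end

section
/- Let X be a nonempty finite type, let p be a probability mass function on X, let δ be a real number with 0 < δ ≤ 1/8, let ξ : X → ℝ satisfy |ξ x − 1| ≤ δ for all x, and set h x = p x · ξ x. Suppose q is a probability mass function on X and λ is a real number such that for every x, (h x − p x)/(q x + h x) + log(q x/(q x + h x)) = −λ. Then for every x, |q x / p x − 1| ≤ 16·δ. -/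
open Finset

lemma exp_quad_bound' {x : ℝ} (h0 : 0 ≤ x) (h1 : x ≤ 1) :
    Real.exp x ≤ 1 + x + (3/4) * x ^ 2 := by
  have hb := Real.exp_bound (x := x) (by rwa [abs_of_nonneg h0]) (n := 2) (by norm_num)
  simp [Finset.sum_range_succ, abs_of_nonneg h0] at hb
  have := abs_le.mp hb
  nlinarith [this.2]

set_option maxHeartbeats 1000000 in
/-- Core analytic step of Theorem 2: any pmf `q` satisfying the Lagrangian
first-order condition of the perturbed Jensen–Shannon loss with `h = p·ξ`,
`|ξ x − 1| ≤ δ ≤ 1/8`, is pointwise within ratio `1 ± 16δ` of `p`. -/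
theorem stmt_8 {X : Type*} [Fintype X] [Nonempty X]
    (p : X → ℝ) (hp : ∀ x, 0 < p x) (hps : ∑ x, p x = 1)
    (δ : ℝ) (hδ0 : 0 < δ) (hδ : δ ≤ 1 / 8)
    (ξ : X → ℝ) (hξ : ∀ x, |ξ x - 1| ≤ δ)
    (h : X → ℝ) (hh : ∀ x, h x = p x * ξ x)
    (q : X → ℝ) (hq : ∀ x, 0 < q x) (hqs : ∑ x, q x = 1)
    (lam : ℝ)
    (hstat : ∀ x, (h x - p x) / (q x + h x) + Real.log (q x / (q x + h x)) = -lam) :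
    ∀ x, |q x / p x - 1| ≤ 16 * δ := by
  have hξlo : ∀ x, 1 - δ ≤ ξ x := fun x => by linarith [(abs_le.mp (hξ x)).1]
  have hξhi : ∀ x, ξ x ≤ 1 + δ := fun x => by linarith [(abs_le.mp (hξ x)).2]
  have hhpos : ∀ x, 0 < h x := fun x => by
    rw [hh x]; exact mul_pos (hp x) (by linarith [hξlo x])
  have hqh : ∀ x, 0 < q x + h x := fun x => by linarith [hq x, hhpos x]
  have hhlo : ∀ x, p x * (1 - δ) ≤ h x := fun x => by
    rw [hh x]; nlinarith [hξlo x, hp x]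
  have hhhi : ∀ x, h x ≤ p x * (1 + δ) := fun x => by
    rw [hh x]; nlinarith [hξhi x, hp x]
  -- the perturbation term is small
  have hεbd : ∀ x, |(h x - p x) / (q x + h x)| ≤ 8/7 * δ := by
    intro x
    have h1 : |h x - p x| ≤ δ * p x := by
      rw [abs_le]
      constructor <;> nlinarith [hhlo x, hhhi x, hp x]
    have h2 : (7/8) * p x ≤ q x + h x := by nlinarith [hhlo x, hq x, hp x]
    rw [abs_div, abs_of_pos (hqh x), div_le_iff₀ (hqh x)]
    nlinarith [hp x]
  -- the ratio t = q/(q+h) satisfies t = exp(-lam) * exp(-ε)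
  have ht : ∀ x, q x / (q x + h x)
      = Real.exp (-lam) * Real.exp (-((h x - p x) / (q x + h x))) := by
    intro x
    have hpos : 0 < q x / (q x + h x) := div_pos (hq x) (hqh x)
    have hl : Real.log (q x / (q x + h x)) = -lam - (h x - p x) / (q x + h x) := by
      have := hstat x; linarith
    rw [← Real.exp_log hpos, hl, ← Real.exp_add]
    ring_nf
  -- there are points with q ≥ p and q ≤ p
  obtain ⟨x0, -, hx0⟩ : ∃ x ∈ Finset.univ, p x ≤ q x :=
    Finset.exists_le_of_sum_le Finset.univ_nonempty (by rw [hps, hqs])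
  obtain ⟨x1, -, hx1⟩ : ∃ x ∈ Finset.univ, q x ≤ p x :=
    Finset.exists_le_of_sum_le Finset.univ_nonempty (by rw [hps, hqs])
  -- at x1 : t ≤ 1/(2-δ); at x0 : t ≥ 1/(2+δ)
  have ht1 : q x1 / (q x1 + h x1) ≤ 1 / (2 - δ) := by
    rw [div_le_div_iff₀ (hqh x1) (by linarith)]
    nlinarith [hhlo x1, hq x1, hp x1]
  have ht0 : 1 / (2 + δ) ≤ q x0 / (q x0 + h x0) := by
    rw [div_le_div_iff₀ (by linarith) (hqh x0)]
    nlinarith [hhhi x0, hq x0, hp x0]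
  -- hence for all x : exp(-16δ/7)/(2+δ) ≤ t x ≤ exp(16δ/7)/(2-δ)
  have htup : ∀ x, q x / (q x + h x) ≤ Real.exp (16/7 * δ) / (2 - δ) := by
    intro x
    have e1 : q x / (q x + h x)
        = (q x1 / (q x1 + h x1)) *
          Real.exp ((h x1 - p x1) / (q x1 + h x1) - (h x - p x) / (q x + h x)) := by
      rw [ht x, ht x1, mul_assoc, ← Real.exp_add, ← Real.exp_add, ← Real.exp_add, Real.exp_eq_exp]
      ring
    rw [e1]
    have hee : Real.exp ((h x1 - p x1) / (q x1 + h x1) - (h x - p x) / (q x + h x))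
        ≤ Real.exp (16/7 * δ) := by
      apply Real.exp_le_exp.mpr
      have b1 := abs_le.mp (hεbd x1)
      have b2 := abs_le.mp (hεbd x)
      linarith [b1.2, b2.1]
    have := (div_pos (hq x1) (hqh x1)).le
    calc q x1 / (q x1 + h x1) * Real.exp _ ≤ (1 / (2 - δ)) * Real.exp (16/7 * δ) := by
          have h2δ : (0:ℝ) < 2 - δ := by linarith
          exact mul_le_mul ht1 hee (Real.exp_pos _).le (by positivity)
      _ = Real.exp (16/7 * δ) / (2 - δ) := by ring
  have htlo : ∀ x, Real.exp (-(16/7 * δ)) / (2 + δ) ≤ q x / (q x + h x) := by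
    intro x
    have e1 : q x / (q x + h x)
        = (q x0 / (q x0 + h x0)) *
          Real.exp ((h x0 - p x0) / (q x0 + h x0) - (h x - p x) / (q x + h x)) := by
      rw [ht x, ht x0, mul_assoc, ← Real.exp_add, ← Real.exp_add, ← Real.exp_add, Real.exp_eq_exp]
      ring
    rw [e1]
    have hee : Real.exp (-(16/7 * δ))
        ≤ Real.exp ((h x0 - p x0) / (q x0 + h x0) - (h x - p x) / (q x + h x)) := by
      apply Real.exp_le_exp.mpr
      have b1 := abs_le.mp (hεbd x0)
      have b2 := abs_le.mp (hεbd x)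
      linarith [b1.1, b2.2]
    calc Real.exp (-(16/7 * δ)) / (2 + δ)
        = (1 / (2 + δ)) * Real.exp (-(16/7 * δ)) := by ring
      _ ≤ (q x0 / (q x0 + h x0)) * Real.exp _ := by
          apply mul_le_mul ht0 hee (Real.exp_pos _).le (div_pos (hq x0) (hqh x0)).le
  -- numeric bounds on the exponentials
  have hE : Real.exp (16/7 * δ) ≤ 1 + 16/7 * δ + 192/49 * δ ^ 2 := by
    have := exp_quad_bound' (x := 16/7 * δ) (by linarith) (by linarith)
    nlinarith
  have hF : 1 - 16/7 * δ ≤ Real.exp (-(16/7 * δ)) := by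
    have := Real.add_one_le_exp (-(16/7 * δ)); linarith
  -- conclude pointwise bounds
  intro x
  set E : ℝ := 1 + 16/7 * δ + 192/49 * δ ^ 2 with hEdef
  have hEpos : (0:ℝ) < E := by rw [hEdef]; positivity
  have hDpos : (0:ℝ) < 2 - δ - E := by
    rw [hEdef]; nlinarith [mul_le_mul_of_nonneg_left hδ hδ0.le]
  have hpoly : E * (1 + δ) ≤ (1 + 16*δ) * (2 - δ - E) := by
    rw [hEdef]
    nlinarith [mul_le_mul_of_nonneg_left hδ (mul_pos hδ0 hδ0).le,
      mul_le_mul_of_nonneg_left hδ hδ0.le]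
  -- upper bound q x ≤ (1+16δ) p x
  have hupper : q x ≤ (1 + 16*δ) * p x := by
    have h1 : q x / (q x + h x) ≤ E / (2 - δ) :=
      (htup x).trans ((div_le_div_iff_of_pos_right (by linarith)).mpr hE)
    have h2 : q x * (2 - δ) ≤ E * (q x + h x) := by
      rw [div_le_div_iff₀ (hqh x) (by linarith)] at h1
      linarith
    have h3 : (2 - δ - E) * q x ≤ (2 - δ - E) * ((1 + 16*δ) * p x) := by
      nlinarith [mul_le_mul_of_nonneg_left (hhhi x) hEpos.le,
        mul_le_mul_of_nonneg_right hpoly (hp x).le]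
    exact le_of_mul_le_mul_left h3 hDpos
  -- lower bound (1-16δ) p x ≤ q x
  have hFpos : (0:ℝ) < 1 - 16/7 * δ := by linarith
  have hlower : (1 - 16*δ) * p x ≤ q x := by
    have h1 : (1 - 16/7 * δ) / (2 + δ) ≤ q x / (q x + h x) := by
      exact le_trans ((div_le_div_iff_of_pos_right (by linarith)).mpr hF) (htlo x)
    have h2 : (1 - 16/7 * δ) * (q x + h x) ≤ q x * (2 + δ) := by
      rw [div_le_div_iff₀ (by linarith) (hqh x)] at h1
      linarith
    have hpoly2 : (1 - 16*δ) * (1 + 23/7*δ) ≤ (1 - 16/7*δ) * (1 - δ) := by nlinarith [mul_pos hδ0 hδ0]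
    have h3 : (1 + 23/7*δ) * ((1 - 16*δ) * p x) ≤ (1 + 23/7*δ) * q x := by
      nlinarith [mul_le_mul_of_nonneg_left (hhlo x) hFpos.le,
        mul_le_mul_of_nonneg_right hpoly2 (hp x).le]
    exact le_of_mul_le_mul_left h3 (by linarith)
  rw [abs_le]
  constructor
  · have : 1 - 16*δ ≤ q x / p x := by
      rw [le_div_iff₀ (hp x)]; linarith
    linarith
  · have : q x / p x ≤ 1 + 16*δ := by
      rw [div_le_iff₀ (hp x)]; linarith
    linarith
end

section
/- Let X be a nonempty finite type, let p be a probability mass function on X, let δ be a real number with 0 < δ ≤ 1/8, let ξ : X → ℝ satisfy |ξ x − 1| ≤ δ for all x, and set h x = p x · ξ x. Let q* be a probability mass function on X minimizing the perturbed Jensen–Shannon loss L(q) = ∑_{x∈X} [ p x · log(h x/(h x + q x)) + q x · log(q x/(q x + h x)) ] over all probability mass functions q on X. Then for every x, |q* x / p x − 1| ≤ 16·δ. -/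
open Finset Real

/-! At a minimizer in the interior of the simplex of a loss `∑ x, F x (q x)`, the
derivatives of the `F x` at the `q x` all agree: otherwise moving a little mass between
two coordinates would decrease the loss. For the perturbed Jensen–Shannon summand with
`h = p * ξ`, the derivative at `q x` depends only on the ratio `r = q x / p x` and on
`ξ x`; it is `jsSlope r (ξ x)`, and for `|ξ x - 1| ≤ δ` it lies between
`jsSlopeLower δ r` and `jsSlopeUpper δ r`, both increasing in `r`. Since `∑ q = ∑ p`,
some ratio is at most `1` and some is at least `1`. A ratio above `1 + 16δ` (below
`1 - 16δ`) would give a slope strictly larger (smaller) than at that coordinate, which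
`log u ≥ 1 - 1/u` rules out. -/

lemma sum_update_update_sub {X : Type*} [Fintype X] [DecidableEq X] {x y : X} (hxy : x ≠ y)
    (q : X → ℝ) (a b : ℝ) (G : X → ℝ → ℝ) :
    ∑ z, G z (Function.update (Function.update q x a) y b z) - ∑ z, G z (q z) =
      (G x a - G x (q x)) + (G y b - G y (q y)) := by
  rw [← sum_sub_distrib, Fintype.sum_eq_add x y hxy fun z ⟨hzx, hzy⟩ => by simp [hzx, hzy]]
  simp [hxy]

lemma sum_update_update_add_sub {X : Type*} [Fintype X] [DecidableEq X] {x y : X} (hxy : x ≠ y)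
    (q : X → ℝ) (ε : ℝ) :
    ∑ z, Function.update (Function.update q x (q x + ε)) y (q y - ε) z = ∑ z, q z := by
  have := sum_update_update_sub hxy q (q x + ε) (q y - ε) fun _ t => t
  linarith

theorem hasDerivAt_eq_of_isMinOn_simplex {X : Type*} [Fintype X] {F : X → ℝ → ℝ} {F' : X → ℝ}
    {q : X → ℝ} (hq : ∀ x, 0 < q x) (hF : ∀ x, HasDerivAt (F x) (F' x) (q x))
    (hmin : ∀ q' : X → ℝ, (∀ x, 0 < q' x) → ∑ x, q' x = ∑ x, q x →
      ∑ x, F x (q x) ≤ ∑ x, F x (q' x))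
    (x y : X) : F' x = F' y := by
  classical
  rcases eq_or_ne x y with rfl | hxy
  · rfl
  have hloc : IsLocalMin (fun ε => F x (q x + ε) + F y (q y - ε)) 0 := by
    filter_upwards [Ioo_mem_nhds (neg_neg_of_pos (hq x)) (hq y)] with ε ⟨hεx, hεy⟩
    set q' := Function.update (Function.update q x (q x + ε)) y (q y - ε)
    have hpos : ∀ z, 0 < q' z := by
      intro z
      rcases eq_or_ne z y with rfl | hzy
      · simp [q']; linarith
      rcases eq_or_ne z x with rfl | hzx
      · simp [q', hzy]; linarith
      simpa [q', hzx, hzy] using hq z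
    have := sub_nonneg.2 (hmin q' hpos (sum_update_update_add_sub hxy q ε))
    rw [sum_update_update_sub hxy] at this
    simp only [add_zero, sub_zero]
    linarith
  have hderiv : HasDerivAt (fun ε => F x (q x + ε) + F y (q y - ε)) (F' x + -F' y) 0 :=
    (HasDerivAt.comp_const_add _ _ (by simpa using hF x)).add
      (HasDerivAt.comp_const_sub _ _ (by simpa using hF y))
  linarith [hloc.hasDerivAt_eq_zero hderiv]

noncomputable def jsTerm (p h t : ℝ) : ℝ := p * log (h / (h + t)) + t * log (t / (t + h))

noncomputable def jsSlope (r ξ : ℝ) : ℝ := log (r / (r + ξ)) + (ξ - 1) / (r + ξ)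

lemma hasDerivAt_jsTerm {p h t : ℝ} (hh : 0 < h) (ht : 0 < t) :
    HasDerivAt (jsTerm p h) (log (t / (t + h)) + (h - p) / (t + h)) t := by
  have hA : HasDerivAt (fun s => h / (h + s)) _ t :=
    (hasDerivAt_const t h).div ((hasDerivAt_id' t).const_add h) (by positivity)
  have hB : HasDerivAt (fun s => s / (s + h)) _ t :=
    (hasDerivAt_id' t).div ((hasDerivAt_id' t).add_const h) (by positivity)
  refine (((hA.log (by positivity)).const_mul p).add
    ((hasDerivAt_id' t).mul (hB.log (by positivity)))).congr_deriv ?_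
  field_simp
  ring

lemma hasDerivAt_jsTerm_mul {p ξ t : ℝ} (hp : 0 < p) (hξ : 0 < ξ) (ht : 0 < t) :
    HasDerivAt (jsTerm p (p * ξ)) (jsSlope (t / p) ξ) t := by
  refine (hasDerivAt_jsTerm (p := p) (by positivity) ht).congr_deriv ?_
  have : t / p + ξ = (t + p * ξ) / p := by field_simp
  unfold jsSlope
  rw [this, div_div_div_cancel_right₀ hp.ne', div_div_eq_mul_div]
  congr 1
  field_simp

noncomputable def jsSlopeUpper (δ a : ℝ) : ℝ := log (a / (a + (1 - δ))) + δ / (1 - δ)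

noncomputable def jsSlopeLower (δ b : ℝ) : ℝ := log (b / (b + (1 + δ))) - δ / (b + (1 - δ))

section Bounds

variable {r ξ δ : ℝ}

lemma jsSlope_le_jsSlopeUpper {a : ℝ} (hδ : δ < 1) (hξ : |ξ - 1| ≤ δ) (hr : 0 < r)
    (hra : r ≤ a) : jsSlope r ξ ≤ jsSlopeUpper δ a := by
  obtain ⟨hξl, hξu⟩ := abs_sub_le_iff.1 hξ
  have hlog : log (r / (r + ξ)) ≤ log (a / (a + (1 - δ))) := by
    apply log_le_log (div_pos hr (by linarith))
    rw [div_le_div_iff₀ (by linarith) (by linarith)]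
    nlinarith
  have hfrac : (ξ - 1) / (r + ξ) ≤ δ / (1 - δ) :=
    div_le_div₀ (by linarith) hξl (by linarith) (by linarith)
  exact add_le_add hlog hfrac

lemma jsSlopeLower_le_jsSlope {b : ℝ} (hδ : δ < 1) (hξ : |ξ - 1| ≤ δ) (hb : 0 < b)
    (hbr : b ≤ r) : jsSlopeLower δ b ≤ jsSlope r ξ := by
  obtain ⟨hξl, hξu⟩ := abs_sub_le_iff.1 hξ
  have hlog : log (b / (b + (1 + δ))) ≤ log (r / (r + ξ)) := by
    apply log_le_log (div_pos hb (by linarith))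
    rw [div_le_div_iff₀ (by linarith) (by linarith)]
    nlinarith
  have hfrac : (1 - ξ) / (r + ξ) ≤ δ / (b + (1 - δ)) :=
    div_le_div₀ (by linarith) hξu (by linarith) (by linarith)
  have hneg : (ξ - 1) / (r + ξ) = -((1 - ξ) / (r + ξ)) := by ring
  rw [jsSlopeLower, jsSlope, hneg]
  linarith

lemma jsSlopeUpper_one_lt_jsSlopeLower (hδ0 : 0 < δ) (hδ : δ ≤ 1 / 8) :
    jsSlopeUpper δ 1 < jsSlopeLower δ (1 + 16 * δ) := by
  have h2 : 0 < 2 - δ := by linarith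
  have hlog : 2 * δ ≤ log ((1 + 16 * δ) / (2 + 17 * δ)) - log (1 / (2 - δ)) := by
    rw [← log_div (by positivity) (one_div_pos.2 h2).ne']
    refine le_trans ?_ (one_sub_inv_le_log_of_pos (div_pos (by positivity) (one_div_pos.2 h2)))
    have hinv : ((1 + 16 * δ) / (2 + 17 * δ) / (1 / (2 - δ)))⁻¹ =
        (2 + 17 * δ) / ((1 + 16 * δ) * (2 - δ)) := by
      field_simp
    rw [hinv, le_sub_iff_add_le, ← le_sub_iff_add_le', div_le_iff₀ (by positivity)]
    nlinarith [mul_nonneg hδ0.le (by linarith : (0:ℝ) ≤ 10 - 78 * δ), pow_pos hδ0 3]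
  have h1 : δ / (1 - δ) ≤ 8 * δ / 7 := by
    rw [div_le_div_iff₀ (by linarith) (by norm_num)]; nlinarith
  have h3 : δ / (2 + 15 * δ) ≤ δ / 2 :=
    div_le_div_of_nonneg_left hδ0.le (by norm_num) (by linarith)
  rw [jsSlopeUpper, jsSlopeLower, show (1 : ℝ) + (1 - δ) = 2 - δ by ring,
    show 1 + 16 * δ + (1 + δ) = 2 + 17 * δ by ring, show 1 + 16 * δ + (1 - δ) = 2 + 15 * δ by ring]
  linarith

lemma jsSlopeUpper_lt_jsSlopeLower_one (hδ0 : 0 < δ) (hδ : 16 * δ < 1) :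
    jsSlopeUpper δ (1 - 16 * δ) < jsSlopeLower δ 1 := by
  have h1 : 0 < 1 - 16 * δ := by linarith
  have h2 : 0 < 2 - 17 * δ := by linarith
  have hlog : 7 * δ ≤ log (1 / (2 + δ)) - log ((1 - 16 * δ) / (2 - 17 * δ)) := by
    rw [← log_div (by positivity) (div_pos h1 h2).ne']
    refine le_trans ?_ (one_sub_inv_le_log_of_pos (div_pos (by positivity) (div_pos h1 h2)))
    have hinv : (1 / (2 + δ) / ((1 - 16 * δ) / (2 - 17 * δ)))⁻¹ =
        (1 - 16 * δ) * (2 + δ) / (2 - 17 * δ) := by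
      field_simp
    rw [hinv, le_sub_iff_add_le, ← le_sub_iff_add_le', div_le_iff₀ h2]
    nlinarith
  have h3 : δ / (1 - δ) ≤ 2 * δ := by
    rw [div_le_iff₀ (by linarith)]; nlinarith
  have h4 : δ / (2 - δ) ≤ 2 * δ := by
    rw [div_le_iff₀ (by linarith)]; nlinarith
  rw [jsSlopeUpper, jsSlopeLower, show (1 : ℝ) + (1 - δ) = 2 - δ by ring,
    show 1 - 16 * δ + (1 - δ) = 2 - 17 * δ by ring, show (1 : ℝ) + (1 + δ) = 2 + δ by ring]
  linarith

end Bounds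

/-- Theorem 2 (Suboptimality Bound for a Single Discriminator): the pmf `q*`
minimizing the perturbed Jensen–Shannon loss with `h = p·ξ`, `|ξ x − 1| ≤ δ ≤ 1/8`,
satisfies `|q* x / p x − 1| ≤ 16δ` for all `x`. -/
theorem stmt_9 {X : Type*} [Fintype X] [Nonempty X]
    (p : X → ℝ) (hp : ∀ x, 0 < p x) (hps : ∑ x, p x = 1)
    (δ : ℝ) (hδ0 : 0 < δ) (hδ : δ ≤ 1 / 8)
    (ξ : X → ℝ) (hξ : ∀ x, |ξ x - 1| ≤ δ)
    (h : X → ℝ) (hh : ∀ x, h x = p x * ξ x)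
    (qs : X → ℝ) (hqs : ∀ x, 0 < qs x) (hqss : ∑ x, qs x = 1)
    (hmin : ∀ q : X → ℝ, (∀ x, 0 < q x) → (∑ x, q x = 1) →
      (∑ x, (p x * Real.log (h x / (h x + qs x)) + qs x * Real.log (qs x / (qs x + h x)))) ≤
      (∑ x, (p x * Real.log (h x / (h x + q x)) + q x * Real.log (q x / (q x + h x))))) :
    ∀ x, |qs x / p x - 1| ≤ 16 * δ := by
  obtain rfl : h = fun x => p x * ξ x := funext hh
  have hδ1 : δ < 1 := by linarith
  have hξpos : ∀ x, 0 < ξ x := fun x => by linarith [(abs_sub_le_iff.1 (hξ x)).2]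
  have hslope : ∀ x y, jsSlope (qs x / p x) (ξ x) = jsSlope (qs y / p y) (ξ y) :=
    hasDerivAt_eq_of_isMinOn_simplex (F := fun x => jsTerm (p x) (p x * ξ x)) hqs
      (fun x => hasDerivAt_jsTerm_mul (hp x) (hξpos x) (hqs x))
      (fun q hq hsum => hmin q hq (hsum.trans hqss))
  obtain ⟨y, -, hy⟩ := exists_le_of_sum_le univ_nonempty (hqss.trans hps.symm).le
  obtain ⟨z, -, hz⟩ := exists_le_of_sum_le univ_nonempty (hps.trans hqss.symm).le
  have hry : qs y / p y ≤ 1 := (div_le_one (hp y)).2 hy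
  have hrz : 1 ≤ qs z / p z := (one_le_div (hp z)).2 hz
  intro x
  have hrx : 0 < qs x / p x := div_pos (hqs x) (hp x)
  refine abs_le.2 ⟨not_lt.1 fun hlt => ?_, not_lt.1 fun hlt => ?_⟩
  · have hδ16 : 16 * δ < 1 := by linarith
    have hupper := jsSlope_le_jsSlopeUpper hδ1 (hξ x) hrx (by linarith : qs x / p x ≤ 1 - 16 * δ)
    have hlower := jsSlopeLower_le_jsSlope hδ1 (hξ z) one_pos hrz
    linarith [jsSlopeUpper_lt_jsSlopeLower_one hδ0 hδ16, hslope x z]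
  · have hupper := jsSlope_le_jsSlopeUpper hδ1 (hξ y) (div_pos (hqs y) (hp y)) hry
    have hlower := jsSlopeLower_le_jsSlope hδ1 (hξ x) (by positivity)
      (by linarith : 1 + 16 * δ ≤ qs x / p x)
    linarith [jsSlopeUpper_one_lt_jsSlopeLower hδ0 hδ, hslope x y]
end
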